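/- arXiv:2501.08679 — 2 statements merged into one kernel-verified Lean document; each statement's English description precedes it below -/
import Mathlib

section
/- Signal time from below (small κ) for the perturbed two-layer dynamics: let t₀ ≥ 0, suppose |h(t)| ≤ κ for all t ≥ t₀ for some κ > 0, suppose z − M ≤ θ(t₀) ≤ z for some M ≥ 0, and assume z ≥ 2κ. Then θ(t) ≥ z/4 for all t ≥ t₀ + T̄sig, where T̄sig = 4 z⁻¹ [2 + (1/2) ln⁺(M/λ) + (1/2) ln⁺(z/(4λ))]. -/
/-!
Along the flow `a² - β² = λ` is conserved, so `a² + β² = √(λ² + 4θ²)` and `φ = arsinh (2θ/λ)`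
satisfies `φ' = 2 (z - θ + h)`. While `θ ≤ z/4` and `|h| ≤ κ ≤ z/2` this gives `φ' ≥ z/2`, so `φ`
climbs from `φ(t₀) ≥ -arsinh (2M/λ)` to `arsinh (z/(2λ))` within the stated time and never falls
back below that level; both arsinh values are at most `2 + ln⁺ w` with `w = M/λ`, `w = z/(4λ)`,
since `arsinh (2w) ≤ log (4w + 1)`.
-/

open Real Set

theorem arsinh_two_mul_lt_two_add_max_log {w : ℝ} (hw : 0 ≤ w) :
    arsinh (2 * w) < 2 + max (log w) 0 := by
  have hsqrt : √(1 + (2 * w) ^ 2) ≤ 2 * w + 1 :=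
    sqrt_le_iff.2 ⟨by positivity, by nlinarith⟩
  have hlog5 : log 5 < 2 := by
    rw [log_lt_iff_lt_exp (by norm_num), show (2 : ℝ) = 1 + 1 by norm_num, exp_add]
    nlinarith [exp_one_gt_d9]
  have harsinh : arsinh (2 * w) ≤ log (4 * w + 1) :=
    log_le_log (by positivity) (by linarith)
  rcases le_or_gt w 1 with hw1 | hw1
  · have : log (4 * w + 1) ≤ log 5 := log_le_log (by positivity) (by linarith)
    linarith [le_max_right (log w) 0]
  · have : log (4 * w + 1) ≤ log 5 + log w := by
      rw [← log_mul (by norm_num) (by linarith)]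
      exact log_le_log (by positivity) (by linarith)
    linarith [le_max_left (log w) 0]

section Barrier

variable {φ φ' : ℝ → ℝ} {s c : ℝ}

theorem exists_le_of_le_deriv_of_lt {r T : ℝ}
    (hφ : ∀ t ∈ Ici s, HasDerivWithinAt φ (φ' t) (Ici s) t)
    (hφ' : ∀ t ∈ Ici s, φ t < c → r ≤ φ' t) (hT : 0 ≤ T) (hc : c ≤ φ s + r * T) :
    ∃ u ∈ Icc s (s + T), c ≤ φ u := by
  by_contra! hlt
  have hline : ∀ x, HasDerivAt (fun t => φ s + r * (t - s)) r x := fun x => by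
    simpa using ((hasDerivAt_id x).sub_const s).const_mul r |>.const_add (φ s)
  have hend : s + T ∈ Icc s (s + T) := right_mem_Icc.2 (by linarith)
  have := image_le_of_deriv_right_le_deriv_boundary
    (fun x _ => (hline x).continuousAt.continuousWithinAt)
    (fun x _ => (hline x).hasDerivWithinAt) (by simp)
    (fun t ht => (hφ t ht.1).continuousWithinAt.mono Icc_subset_Ici_self)
    (fun x hx => (hφ x hx.1).mono (Ici_subset_Ici.2 hx.1))
    (fun x hx => hφ' x hx.1 (hlt x (Ico_subset_Icc_self hx))) hend
  linarith [hlt _ hend]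

theorem le_of_le_of_deriv_pos
    (hφ : ∀ t ∈ Ici s, HasDerivWithinAt φ (φ' t) (Ici s) t)
    (hφ' : ∀ t ∈ Ici s, φ t = c → 0 < φ' t) (hs : c ≤ φ s) {t : ℝ} (ht : s ≤ t) :
    c ≤ φ t :=
  image_le_of_deriv_right_lt_deriv_boundary' (f' := 0) continuousOn_const
    (fun x _ => hasDerivWithinAt_const x _ c) hs
    (fun t ht => (hφ t ht.1).continuousWithinAt.mono Icc_subset_Ici_self)
    (fun x hx => (hφ x hx.1).mono (Ici_subset_Ici.2 hx.1))
    (fun x hx hx' => hφ' x hx.1 hx'.symm) (right_mem_Icc.2 ht)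

theorem le_of_le_deriv_of_le {r T : ℝ} (hr : 0 < r)
    (hφ : ∀ t ∈ Ici s, HasDerivWithinAt φ (φ' t) (Ici s) t)
    (hφ' : ∀ t ∈ Ici s, φ t ≤ c → r ≤ φ' t) (hT : 0 ≤ T) (hc : c ≤ φ s + r * T)
    {t : ℝ} (ht : s + T ≤ t) : c ≤ φ t := by
  obtain ⟨u, hu, hcu⟩ := exists_le_of_le_deriv_of_lt hφ (fun t ht h => hφ' t ht h.le) hT hc
  have hφu : ∀ t ∈ Ici u, HasDerivWithinAt φ (φ' t) (Ici u) t := fun t ht =>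
    (hφ t (hu.1.trans ht)).mono (Ici_subset_Ici.2 hu.1)
  exact le_of_le_of_deriv_pos hφu
    (fun t ht h => hr.trans_le (hφ' t (hu.1.trans ht) h.le)) hcu (hu.2.trans ht)

end Barrier

section TwoLayer

variable {a β : ℝ → ℝ} {s : Set ℝ} {t c : ℝ}

theorem hasDerivWithinAt_sq_sub_sq_of_twoLayer (hβ : HasDerivWithinAt β (a t * c) s t)
    (ha : HasDerivWithinAt a (β t * c) s t) :
    HasDerivWithinAt (fun t => a t ^ 2 - β t ^ 2) 0 s t := by
  exact ((ha.pow 2).sub (hβ.pow 2)).congr_deriv (by simp only [Nat.cast_ofNat]; ring)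

theorem hasDerivWithinAt_mul_of_twoLayer (hβ : HasDerivWithinAt β (a t * c) s t)
    (ha : HasDerivWithinAt a (β t * c) s t) :
    HasDerivWithinAt (fun t => a t * β t) ((a t ^ 2 + β t ^ 2) * c) s t := by
  exact (ha.mul hβ).congr_deriv (by ring)

/-- Since `(a² + β²)² = (a² - β²)² + (2aβ)²`, on the level set `a² - β² = λ` the substitution
`φ = arsinh (2aβ / λ)` turns `(aβ)' = (a² + β²) c` into `φ' = 2c`. -/
theorem hasDerivWithinAt_arsinh_of_twoLayer {lam : ℝ} (hlam : 0 < lam)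
    (hlevel : a t ^ 2 - β t ^ 2 = lam) (hβ : HasDerivWithinAt β (a t * c) s t)
    (ha : HasDerivWithinAt a (β t * c) s t) :
    HasDerivWithinAt (fun t => arsinh (2 * (a t * β t) / lam)) (2 * c) s t := by
  have hpos : 0 < a t ^ 2 + β t ^ 2 := by nlinarith [sq_nonneg (β t)]
  have hnorm : √(1 + (2 * (a t * β t) / lam) ^ 2) = (a t ^ 2 + β t ^ 2) / lam := by
    rw [sqrt_eq_iff_mul_self_eq_of_pos (by positivity)]
    field_simp
    rw [← hlevel]
    ring
  convert (((hasDerivWithinAt_mul_of_twoLayer hβ ha).const_mul 2).div_const lam).arsinh using 1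
  rw [hnorm, smul_eq_mul]
  field_simp

theorem sq_sub_sq_eq_of_twoLayer {g : ℝ → ℝ} {t₀ : ℝ}
    (hode : ∀ t ∈ Ici t₀, HasDerivWithinAt β (a t * g t) (Ici t₀) t ∧
      HasDerivWithinAt a (β t * g t) (Ici t₀) t) (ht : t₀ ≤ t) :
    a t ^ 2 - β t ^ 2 = a t₀ ^ 2 - β t₀ ^ 2 := by
  refine constant_of_has_deriv_right_zero (f := fun t => a t ^ 2 - β t ^ 2)
    (fun x hx => ?_) (fun x hx => ?_) t ⟨ht, le_rfl⟩
  · exact (hasDerivWithinAt_sq_sub_sq_of_twoLayer (hode x hx.1).1 (hode x hx.1).2)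
      |>.continuousWithinAt.mono Icc_subset_Ici_self
  · exact (hasDerivWithinAt_sq_sub_sq_of_twoLayer (hode x hx.1).1 (hode x hx.1).2).mono
      (Ici_subset_Ici.2 hx.1)

end TwoLayer

theorem stmt_2_general (lam z κ t₀ M : ℝ) (h a β : ℝ → ℝ)
    (hlam : 0 < lam)
    (ha0 : a 0 = Real.sqrt lam) (hβ0 : β 0 = 0)
    (hode : ∀ t ∈ Ici (0 : ℝ),
      HasDerivWithinAt β (a t * (z - a t * β t + h t)) (Ici 0) t ∧
      HasDerivWithinAt a (β t * (z - a t * β t + h t)) (Ici 0) t)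
    (ht₀ : 0 ≤ t₀) (hκ : 0 < κ)
    (hhb : ∀ t, t₀ ≤ t → |h t| ≤ κ) (hM : 0 ≤ M)
    (hlow : z - M ≤ a t₀ * β t₀)
    (hz : 2 * κ ≤ z) :
    ∀ t : ℝ, t₀ + 4 * z⁻¹ * (2 + (1 / 2) * max (Real.log (M / lam)) 0
        + (1 / 2) * max (Real.log (z / (4 * lam))) 0) ≤ t →
      z / 4 ≤ a t * β t := by
  intro t ht
  have hz0 : 0 < z := by linarith
  have hlevel : ∀ t ∈ Ici (0 : ℝ), a t ^ 2 - β t ^ 2 = lam := fun t ht => by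
    rw [sq_sub_sq_eq_of_twoLayer hode ht, ha0, hβ0, sq_sqrt hlam.le]
    ring
  have hφ : ∀ t ∈ Ici t₀, HasDerivWithinAt (fun t => arsinh (2 * (a t * β t) / lam))
      (2 * (z - a t * β t + h t)) (Ici t₀) t := fun t ht =>
    (hasDerivWithinAt_arsinh_of_twoLayer hlam (hlevel t (ht₀.trans ht))
      (hode t (ht₀.trans ht)).1 (hode t (ht₀.trans ht)).2).mono (Ici_subset_Ici.2 ht₀)
  have harsinh_le (x y : ℝ) : arsinh (2 * x / lam) ≤ arsinh (2 * y / lam) ↔ x ≤ y := by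
    rw [arsinh_le_arsinh, div_le_div_iff_of_pos_right hlam]
    constructor <;> intro <;> linarith
  refine (harsinh_le _ _).1 (le_of_le_deriv_of_le (r := z / 2) (by positivity) hφ
    (fun u hu hθu => ?_) (by positivity) ?_ ht)
  · have := (harsinh_le _ _).1 hθu
    have := abs_le.1 (hhb u hu)
    linarith
  · have hstart : -(2 + max (log (M / lam)) 0) ≤ arsinh (2 * (a t₀ * β t₀) / lam) := by
      calc -(2 + max (log (M / lam)) 0) ≤ -arsinh (2 * (M / lam)) :=
            neg_le_neg (arsinh_two_mul_lt_two_add_max_log (by positivity)).le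
        _ = arsinh (2 * (-M) / lam) := by rw [← arsinh_neg]; ring_nf
        _ ≤ arsinh (2 * (a t₀ * β t₀) / lam) := (harsinh_le _ _).2 (by linarith)
    have htarget : arsinh (2 * (z / 4) / lam) ≤ 2 + max (log (z / (4 * lam))) 0 := by
      rw [show 2 * (z / 4) / lam = 2 * (z / (4 * lam)) by ring]
      exact (arsinh_two_mul_lt_two_add_max_log (by positivity)).le
    have htime : z / 2 * (4 * z⁻¹ * (2 + 1 / 2 * max (log (M / lam)) 0
        + 1 / 2 * max (log (z / (4 * lam))) 0))
        = 4 + max (log (M / lam)) 0 + max (log (z / (4 * lam))) 0 := by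
      field_simp
      ring
    linarith

/-- Signal time from below (small κ) for the perturbed two-layer dynamics. -/
theorem stmt_2 (lam z κ t₀ M : ℝ) (h a β : ℝ → ℝ)
    (hlam : 0 < lam) (hh : ContinuousOn h (Ici 0))
    (ha0 : a 0 = Real.sqrt lam) (hβ0 : β 0 = 0)
    (hode : ∀ t ∈ Ici (0 : ℝ),
      HasDerivWithinAt β (a t * (z - a t * β t + h t)) (Ici 0) t ∧
      HasDerivWithinAt a (β t * (z - a t * β t + h t)) (Ici 0) t)
    (ht₀ : 0 ≤ t₀) (hκ : 0 < κ)
    (hhb : ∀ t, t₀ ≤ t → |h t| ≤ κ) (hM : 0 ≤ M)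
    (hlow : z - M ≤ a t₀ * β t₀) (hhigh : a t₀ * β t₀ ≤ z)
    (hz : 2 * κ ≤ z) :
    ∀ t : ℝ, t₀ + 4 * z⁻¹ * (2 + (1 / 2) * max (Real.log (M / lam)) 0
        + (1 / 2) * max (Real.log (z / (4 * lam))) 0) ≤ t →
      z / 4 ≤ a t * β t :=
  stmt_2_general lam z κ t₀ M h a β hlam ha0 hβ0 hode ht₀ hκ hhb hM hlow hz
end

section
/- Approximation bound (small κ) for the perturbed two-layer dynamics: assume z ≥ 0, let t₀ ≥ 0, suppose |h(t)| ≤ κ for all t ≥ t₀ for some κ > 0, and assume z ≥ 2κ. Then for every δ > 0, |z − θ(t)| ≤ κ + δ for all t ≥ t₀ + T̄app(δ), where T̄app(δ) = 4z⁻¹ [2 + (1/2) ln⁺(|z − θ(t₀)|/λ) + (1/2) ln⁺(z/(4λ)) + ln⁺(2z/δ)]. -/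
/-!
Along the dynamics `a² - β²` is conserved, so `θ = aβ` solves the scalar equation
`θ' = F (z - θ + h)` whose speed `F = a² + β² = √(λ² + 4θ²)` is at least `λ` and exceeds `2|θ|`.
Once `|h| ≤ κ ≤ z/2`, comparison with explicit barriers traps `θ` in `[z - κ - δ, z + κ + δ]`.
From below: `-θ` decays at rate `z` down to `λ/2`, then `θ` climbs at speed at least `λz/4` up to
`min λ (z/4)`, grows at rate `z/2` up to `z/4`, and finally `z - κ - θ` decays at rate `z/2`.
From above: `θ - z - κ` decays at rate `max λ (2z)` down to `2z`, then at rate `2z`.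
The durations of these phases add up to at most `T̄app(δ)`.
-/

open Real Set

theorem forall_hasDerivWithinAt_Ici_mono {g g' : ℝ → ℝ} {s s' : ℝ} (hss' : s ≤ s')
    (hg : ∀ τ ∈ Ici s, HasDerivWithinAt g (g' τ) (Ici s) τ) :
    ∀ τ ∈ Ici s', HasDerivWithinAt g (g' τ) (Ici s') τ := fun τ hτ =>
  (hg τ (hss'.trans hτ)).mono (Ici_subset_Ici.2 hss')

theorem image_le_of_deriv_le_deriv_boundary_where_ge {f f' B B' : ℝ → ℝ} {a b : ℝ}
    (hab : a ≤ b) (hf : ∀ x ∈ Ici a, HasDerivWithinAt f (f' x) (Ici a) x)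
    (hB : ∀ x, HasDerivAt B (B' x) x) (ha : f a ≤ B a)
    (bound : ∀ x ∈ Ico a b, B x ≤ f x → f' x ≤ B' x) : f b ≤ B b := by
  have hfc : ContinuousOn f (Icc a b) := fun x hx =>
    (hf x hx.1).continuousWithinAt.mono Icc_subset_Ici_self
  have hf' : ∀ x ∈ Ico a b, HasDerivWithinAt f (f' x) (Ici x) x := fun x hx =>
    (hf x hx.1).mono (Ici_subset_Ici.2 hx.1)
  refine le_of_forall_pos_le_add fun ε hε => ?_
  -- lifting the boundary by a line of positive slope makes every contact strict
  set η := ε / (b - a + 1)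
  have hη : 0 < η := div_pos hε (by linarith)
  have hBη : ∀ x, HasDerivAt (fun x => B x + η * (x - a + 1)) (B' x + η) x := fun x =>
    ((hB x).add ((((hasDerivAt_id x).sub_const a).add_const 1).const_mul η)).congr_deriv (by ring)
  have := image_le_of_deriv_right_lt_deriv_boundary hfc hf' (by linarith) hBη
    (fun x hx hfx => (bound x hx (by nlinarith [hx.1])).trans_lt (lt_add_of_pos_right _ hη))
    (right_mem_Icc.2 hab)
  rwa [div_mul_cancel₀ ε (by linarith)] at this

theorem le_max_of_deriv_nonpos_of_ge {g g' : ℝ → ℝ} {s c : ℝ}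
    (hg : ∀ τ ∈ Ici s, HasDerivWithinAt g (g' τ) (Ici s) τ)
    (hc : ∀ τ ∈ Ici s, c ≤ g τ → g' τ ≤ 0) : ∀ t ∈ Ici s, g t ≤ max c (g s) := fun _ ht =>
  image_le_of_deriv_le_deriv_boundary_where_ge ht hg (fun _ => hasDerivAt_const _ _)
    (le_max_right _ _) fun τ hτ hle => hc τ hτ.1 ((le_max_left _ _).trans hle)

theorem le_of_deriv_le_neg_of_ge {g g' : ℝ → ℝ} {s m A G : ℝ} (hm : 0 < m) (hAG : A ≤ G)
    (hg : ∀ τ ∈ Ici s, HasDerivWithinAt g (g' τ) (Ici s) τ)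
    (hdecay : ∀ τ ∈ Ici s, A ≤ g τ → g' τ ≤ -m) (hs : g s ≤ G) :
    ∀ t, s + (G - A) / m ≤ t → g t ≤ A := by
  intro t ht
  set t₁ := s + (G - A) / m
  have hst₁ : s ≤ t₁ := le_add_of_nonneg_right (div_nonneg (sub_nonneg.2 hAG) hm.le)
  have hB : ∀ τ, HasDerivAt (fun τ => A + m * (t₁ - τ)) (-m) τ := fun τ => by
    simpa using (((hasDerivAt_id τ).const_sub t₁).const_mul m).const_add A
  have h₁ : g t₁ ≤ A := by
    have := image_le_of_deriv_le_deriv_boundary_where_ge hst₁ hg hB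
      (by rw [add_sub_cancel_left, mul_div_cancel₀ _ hm.ne']; linarith)
      fun τ hτ hle => hdecay τ hτ.1 (by nlinarith [hτ.2])
    simpa using this
  have := le_max_of_deriv_nonpos_of_ge (forall_hasDerivWithinAt_Ici_mono hst₁ hg)
    (fun τ hτ hle => (hdecay τ (hst₁.trans hτ) hle).trans (neg_nonpos.2 hm.le)) t ht
  rwa [max_eq_left h₁] at this

theorem le_of_deriv_le_neg_mul_of_ge {g g' : ℝ → ℝ} {s r c G : ℝ} (hr : 0 < r) (hc : 0 < c)
    (hG : 0 ≤ G) (hg : ∀ τ ∈ Ici s, HasDerivWithinAt g (g' τ) (Ici s) τ)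
    (hdecay : ∀ τ ∈ Ici s, c ≤ g τ → g' τ ≤ -(r * g τ)) (hs : g s ≤ G) :
    ∀ t, s + r⁻¹ * log⁺ (G / c) ≤ t → g t ≤ c := by
  intro t ht
  set t₁ := s + r⁻¹ * log⁺ (G / c)
  have hst₁ : s ≤ t₁ := le_add_of_nonneg_right (mul_nonneg (inv_nonneg.2 hr.le) posLog_nonneg)
  have hB : ∀ τ, HasDerivAt (fun τ => c * exp (r * (t₁ - τ)))
      (-(r * (c * exp (r * (t₁ - τ))))) τ := fun τ =>
    ((((hasDerivAt_id' τ).const_sub t₁).const_mul r).exp.const_mul c).congr_deriv (by ring)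
  have hBs : c * exp (r * (t₁ - s)) = max c G := by
    rw [add_sub_cancel_left, mul_inv_cancel_left₀ hr.ne', posLog_eq_log_max_one (by positivity),
      exp_log (by positivity), mul_max_of_nonneg _ _ hc.le, mul_one, mul_div_cancel₀ _ hc.ne']
  have h₁ : g t₁ ≤ c := by
    have := image_le_of_deriv_le_deriv_boundary_where_ge hst₁ hg hB
      (hBs ▸ hs.trans (le_max_right _ _)) fun τ hτ hle => by
        have hcB : c ≤ c * exp (r * (t₁ - τ)) :=
          le_mul_of_one_le_right hc.le (one_le_exp (by nlinarith [hτ.2]))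
        have := hdecay τ hτ.1 (hcB.trans hle)
        nlinarith
    simpa using this
  have := le_max_of_deriv_nonpos_of_ge (forall_hasDerivWithinAt_Ici_mono hst₁ hg)
    (fun τ hτ hle => (hdecay τ (hst₁.trans hτ) hle).trans (by nlinarith)) t ht
  rwa [max_eq_left h₁] at this

theorem le_of_mul_abs_lt_deriv_of_le {g g' : ℝ → ℝ} {s r c G : ℝ} (hr : 0 < r) (hc : 0 < c)
    (hG : 0 < G) (hg : ∀ τ ∈ Ici s, HasDerivWithinAt g (g' τ) (Ici s) τ)
    (hgrowth : ∀ τ ∈ Ici s, g τ ≤ c → r * |g τ| < g' τ) (hs : G ≤ g s) :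
    ∀ t, s + r⁻¹ * log⁺ (c / G) ≤ t → c ≤ g t := by
  intro t ht
  set t₁ := s + r⁻¹ * log⁺ (c / G)
  have hst₁ : s ≤ t₁ := le_add_of_nonneg_right (mul_nonneg (inv_nonneg.2 hr.le) posLog_nonneg)
  have hB : ∀ τ, HasDerivAt (fun τ => -(c * exp (r * (τ - t₁))))
      (-(r * (c * exp (r * (τ - t₁))))) τ := fun τ =>
    ((((hasDerivAt_id' τ).sub_const t₁).const_mul r).exp.const_mul c).neg.congr_deriv
      (by ring)
  have hBs : c * exp (r * (s - t₁)) ≤ G := by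
    rw [show r * (s - t₁) = -log⁺ (c / G) by simp only [t₁]; field_simp; ring,
      posLog_eq_log_max_one (by positivity), exp_neg, exp_log (by positivity)]
    rw [← div_eq_mul_inv, div_le_iff₀ (by positivity)]
    calc c = G * (c / G) := by field_simp
      _ ≤ G * max 1 (c / G) := mul_le_mul_of_nonneg_left (le_max_right _ _) hG.le
  -- `r |g|` matches the barrier's slope only where `g` touches it, so contacts must be strict
  have h₁ : c ≤ g t₁ := by
    have := image_le_of_deriv_right_lt_deriv_boundary (f := fun τ => -g τ) (f' := fun τ => -g' τ)
      (B := fun τ => -(c * exp (r * (τ - t₁))))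
      (fun τ hτ => (hg τ hτ.1).neg.continuousWithinAt.mono Icc_subset_Ici_self)
      (fun τ hτ => (hg τ hτ.1).neg.mono (Ici_subset_Ici.2 hτ.1)) (neg_le_neg (hBs.trans hs)) hB
      (fun τ hτ heq => by
        have hgB : g τ = c * exp (r * (τ - t₁)) := neg_inj.1 heq
        have hBc : c * exp (r * (τ - t₁)) ≤ c :=
          mul_le_of_le_one_right hc.le (exp_le_one_iff.2 (by nlinarith [hτ.2]))
        have := hgrowth τ hτ.1 (hgB ▸ hBc)
        rw [hgB, abs_of_pos (by positivity)] at this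
        linarith)
      (right_mem_Icc.2 hst₁)
    simpa using this
  have := le_max_of_deriv_nonpos_of_ge (g := fun τ => -g τ) (g' := fun τ => -g' τ) (c := -c)
    (fun τ hτ => ((forall_hasDerivWithinAt_Ici_mono hst₁ hg) τ hτ).neg)
    (fun τ hτ hle => by
      have := hgrowth τ (hst₁.trans hτ) (by linarith)
      nlinarith [abs_nonneg (g τ)]) t ht
  simp only [max_eq_left (neg_le_neg h₁)] at this
  linarith

theorem posLog_le_self {x : ℝ} (hx : 0 ≤ x) : log⁺ x ≤ x :=
  max_le hx (log_le_self hx)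

theorem inv_max_mul_posLog_div_le {l w : ℝ} (hl : 0 < l) (hw : 0 < w) (U : ℝ) :
    (max l w)⁻¹ * log⁺ (U / w) ≤ w⁻¹ * (log⁺ (U / l) + 1) := by
  have hsplit : log⁺ (U / w) ≤ log⁺ (U / l) + l / w := by
    calc log⁺ (U / w) = log⁺ (U / l * (l / w)) := by rw [div_mul_div_cancel₀ hl.ne']
      _ ≤ log⁺ (U / l) + log⁺ (l / w) := posLog_mul
      _ ≤ log⁺ (U / l) + l / w := by gcongr; exact posLog_le_self (by positivity)
  have hMw : (max l w)⁻¹ ≤ w⁻¹ := inv_anti₀ hw (le_max_right _ _)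
  have hMl : (max l w)⁻¹ * l ≤ 1 := by
    rw [inv_mul_le_one₀ (lt_max_of_lt_left hl)]; exact le_max_left _ _
  calc (max l w)⁻¹ * log⁺ (U / w) ≤ (max l w)⁻¹ * (log⁺ (U / l) + l / w) := by gcongr
    _ = (max l w)⁻¹ * log⁺ (U / l) + (max l w)⁻¹ * l * w⁻¹ := by ring
    _ ≤ w⁻¹ * log⁺ (U / l) + 1 * w⁻¹ := by gcongr; exact posLog_nonneg
    _ = w⁻¹ * (log⁺ (U / l) + 1) := by ring

/-- The paper's `T̄app(δ)`, for the initial error `U = |z - θ(t₀)|`. -/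
noncomputable def approxTime (lam z U δ : ℝ) : ℝ :=
  4 * z⁻¹ * (2 + 1 / 2 * log⁺ (U / lam) + 1 / 2 * log⁺ (z / (4 * lam)) + log⁺ (2 * z / δ))

/-- The product `θ = a β` of the two-layer dynamics, with speed `F = a² + β²`. -/
structure IsPerturbedRelaxation (θ F h : ℝ → ℝ) (lam z κ s : ℝ) : Prop where
  hasDerivWithinAt : ∀ τ ∈ Ici s, HasDerivWithinAt θ (F τ * (z - θ τ + h τ)) (Ici s) τ
  lam_le : ∀ τ ∈ Ici s, lam ≤ F τ
  two_mul_abs_lt : ∀ τ ∈ Ici s, 2 * |θ τ| < F τ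
  abs_perturbation_le : ∀ τ ∈ Ici s, |h τ| ≤ κ

namespace IsPerturbedRelaxation

variable {θ F h : ℝ → ℝ} {lam z κ s : ℝ}

theorem mono (hD : IsPerturbedRelaxation θ F h lam z κ s) {s' : ℝ} (hs : s ≤ s') :
    IsPerturbedRelaxation θ F h lam z κ s' where
  hasDerivWithinAt := forall_hasDerivWithinAt_Ici_mono hs hD.hasDerivWithinAt
  lam_le τ hτ := hD.lam_le τ (hs.trans hτ)
  two_mul_abs_lt τ hτ := hD.two_mul_abs_lt τ (hs.trans hτ)
  abs_perturbation_le τ hτ := hD.abs_perturbation_le τ (hs.trans hτ)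

theorem kappa_nonneg (hD : IsPerturbedRelaxation θ F h lam z κ s) : 0 ≤ κ :=
  (abs_nonneg _).trans (hD.abs_perturbation_le s self_mem_Ici)

theorem neg_le_half_lam (hD : IsPerturbedRelaxation θ F h lam z κ s) (hlam : 0 < lam)
    (hz : 0 < z) (hκ : 2 * κ ≤ z) :
    ∀ t, s + z⁻¹ * log⁺ (|z - θ s| / (lam / 2)) ≤ t → -θ t ≤ lam / 2 := by
  have := le_of_deriv_le_neg_mul_of_ge (g := fun τ => -θ τ) hz (half_pos hlam)
    (abs_nonneg (z - θ s)) (fun τ hτ => (hD.hasDerivWithinAt τ hτ).neg) (fun τ hτ hle => by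
      have hF := hD.two_mul_abs_lt τ hτ
      have hh := (abs_le.1 (hD.abs_perturbation_le τ hτ)).1
      rw [abs_of_neg (by linarith)] at hF
      nlinarith)
    (by linarith [le_abs_self (z - θ s)])
  exact this

theorem min_le_of_neg_le (hD : IsPerturbedRelaxation θ F h lam z κ s) (hlam : 0 < lam)
    (hz : 0 < z) (hκ : 2 * κ ≤ z) (hs : -θ s ≤ lam / 2) :
    ∀ t, s + 6 / z ≤ t → min lam (z / 4) ≤ θ t := by
  have hμ : min lam (z / 4) ≤ lam := min_le_left _ _
  have hμ' : min lam (z / 4) ≤ z / 4 := min_le_right _ _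
  have := le_of_deriv_le_neg_of_ge (g := fun τ => -θ τ) (m := lam * z / 4)
    (A := -min lam (z / 4)) (G := lam / 2) (by positivity)
    (by linarith [lt_min hlam (by positivity : 0 < z / 4)])
    (fun τ hτ => (hD.hasDerivWithinAt τ hτ).neg) (fun τ hτ hle => by
      have hF := hD.lam_le τ hτ
      have hh := (abs_le.1 (hD.abs_perturbation_le τ hτ)).1
      have : z / 4 ≤ z - θ τ + h τ := by linarith
      nlinarith)
    (by simpa using hs)
  intro t ht
  have hdur : (lam / 2 - -min lam (z / 4)) / (lam * z / 4) ≤ 6 / z := by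
    rw [div_le_div_iff₀ (by positivity) hz]; nlinarith
  simpa using this t (by linarith)

theorem quarter_le_of_min_le (hD : IsPerturbedRelaxation θ F h lam z κ s) (hlam : 0 < lam)
    (hz : 0 < z) (hκ : 2 * κ ≤ z) (hs : min lam (z / 4) ≤ θ s) :
    ∀ t, s + 2 / z * log⁺ (z / (4 * lam)) ≤ t → z / 4 ≤ θ t := by
  have := le_of_mul_abs_lt_deriv_of_le (half_pos hz) (by positivity : 0 < z / 4)
    (lt_min hlam (by positivity)) hD.hasDerivWithinAt (fun τ hτ hle => by
      have hF := hD.two_mul_abs_lt τ hτ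
      have hh := (abs_le.1 (hD.abs_perturbation_le τ hτ)).1
      have : z / 4 ≤ z - θ τ + h τ := by linarith
      nlinarith [abs_nonneg (θ τ)]) hs
  intro t ht
  refine this t (le_trans ?_ ht)
  rw [inv_div]
  refine (add_le_add_iff_left s).2 (mul_le_mul_of_nonneg_left ?_ (by positivity))
  rcases min_cases lam (z / 4) with ⟨hmin, -⟩ | ⟨hmin, -⟩
  · rw [hmin, div_div, mul_comm]
  · rw [hmin, div_self (by positivity), posLog_one]; exact posLog_nonneg

theorem sub_le_of_quarter_le (hD : IsPerturbedRelaxation θ F h lam z κ s) (hz : 0 < z)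
    (hs : ∀ τ ∈ Ici s, z / 4 ≤ θ τ) {δ : ℝ} (hδ : 0 < δ) :
    ∀ t, s + 2 / z * log⁺ (z / δ) ≤ t → z - κ - θ t ≤ δ := by
  have := le_of_deriv_le_neg_mul_of_ge (half_pos hz) hδ hz.le
    (fun τ hτ => (hD.hasDerivWithinAt τ hτ).const_sub (z - κ)) (fun τ hτ hle => by
      have hF := hD.two_mul_abs_lt τ hτ
      have hh := (abs_le.1 (hD.abs_perturbation_le τ hτ)).1
      have hq := hs τ hτ
      rw [abs_of_pos (by linarith)] at hF
      nlinarith)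
    (by linarith [hs s self_mem_Ici, hD.kappa_nonneg])
  intro t ht
  exact this t (by rwa [inv_div])

theorem sub_le_two_mul (hD : IsPerturbedRelaxation θ F h lam z κ s) (hz : 0 < z) :
    ∀ t, s + (max lam (2 * z))⁻¹ * log⁺ (|z - θ s| / (2 * z)) ≤ t → θ t - (z + κ) ≤ 2 * z :=
  le_of_deriv_le_neg_mul_of_ge (lt_max_of_lt_right (by positivity)) (by positivity)
    (abs_nonneg _) (fun τ hτ => (hD.hasDerivWithinAt τ hτ).sub_const (z + κ)) (fun τ hτ hle => by
      have hF := hD.two_mul_abs_lt τ hτ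
      have hF' := hD.lam_le τ hτ
      have hh := (abs_le.1 (hD.abs_perturbation_le τ hτ)).2
      have hκ := hD.kappa_nonneg
      rw [abs_of_pos (by linarith)] at hF
      have hM : max lam (2 * z) ≤ F τ := max_le hF' (by linarith)
      nlinarith)
    (by linarith [neg_abs_le (z - θ s), hD.kappa_nonneg])

theorem sub_le_of_sub_le_two_mul (hD : IsPerturbedRelaxation θ F h lam z κ s) (hz : 0 < z)
    (hs : θ s - (z + κ) ≤ 2 * z) {δ : ℝ} (hδ : 0 < δ) :
    ∀ t, s + (2 * z)⁻¹ * log⁺ (2 * z / δ) ≤ t → θ t - (z + κ) ≤ δ :=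
  le_of_deriv_le_neg_mul_of_ge (by positivity) hδ (by positivity)
    (fun τ hτ => (hD.hasDerivWithinAt τ hτ).sub_const (z + κ)) (fun τ hτ hle => by
      have hF := hD.two_mul_abs_lt τ hτ
      have hh := (abs_le.1 (hD.abs_perturbation_le τ hτ)).2
      have hκ := hD.kappa_nonneg
      rw [abs_of_pos (by linarith)] at hF
      nlinarith) hs

theorem sub_sub_le_of_approxTime_le (hD : IsPerturbedRelaxation θ F h lam z κ s)
    (hlam : 0 < lam) (hz : 0 < z) (hκ : 2 * κ ≤ z) {δ : ℝ} (hδ : 0 < δ) :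
    ∀ t, s + approxTime lam z |z - θ s| δ ≤ t → z - κ - θ t ≤ δ := by
  intro t ht
  have hzi : 0 ≤ z⁻¹ := inv_nonneg.2 hz.le
  set s₁ := s + z⁻¹ * log⁺ (|z - θ s| / (lam / 2))
  set s₂ := s₁ + 6 / z
  set s₃ := s₂ + 2 / z * log⁺ (z / (4 * lam))
  have hs₁ : s ≤ s₁ := le_add_of_nonneg_right (mul_nonneg hzi posLog_nonneg)
  have hs₂ : s₁ ≤ s₂ := le_add_of_nonneg_right (by positivity)
  have hs₃ : s₂ ≤ s₃ := le_add_of_nonneg_right (mul_nonneg (by positivity) posLog_nonneg)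
  have h₁ := hD.neg_le_half_lam hlam hz hκ s₁ le_rfl
  have h₂ := (hD.mono hs₁).min_le_of_neg_le hlam hz hκ h₁ s₂ le_rfl
  have h₃ := (hD.mono (hs₁.trans hs₂)).quarter_le_of_min_le hlam hz hκ h₂
  refine (hD.mono (hs₁.trans (hs₂.trans hs₃))).sub_le_of_quarter_le hz h₃ hδ t ?_
  have hL₁ : log⁺ (|z - θ s| / (lam / 2)) ≤ 1 + log⁺ (|z - θ s| / lam) := by
    calc log⁺ (|z - θ s| / (lam / 2)) = log⁺ ((2 : ℕ) * (|z - θ s| / lam)) := by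
          push_cast; field_simp
      _ ≤ log 2 + log⁺ (|z - θ s| / lam) := by exact_mod_cast posLog_nat_mul
      _ ≤ 1 + log⁺ (|z - θ s| / lam) := by linarith [log_two_lt_d9]
  have hL₃ : log⁺ (z / δ) ≤ log⁺ (2 * z / δ) :=
    posLog_le_posLog (by positivity) (by gcongr; linarith)
  have hsum := mul_le_mul_of_nonneg_left
    (show log⁺ (|z - θ s| / (lam / 2)) + 6 + 2 * log⁺ (z / (4 * lam)) + 2 * log⁺ (z / δ) ≤
      4 * (2 + 1 / 2 * log⁺ (|z - θ s| / lam) + 1 / 2 * log⁺ (z / (4 * lam)) + log⁺ (2 * z / δ))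
      by linarith [posLog_nonneg (x := |z - θ s| / lam), posLog_nonneg (x := 2 * z / δ)]) hzi
  simp only [approxTime, s₃, s₂, s₁] at ht ⊢
  rw [div_eq_mul_inv 6 z, div_eq_mul_inv 2 z]
  linarith

theorem sub_add_le_of_approxTime_le (hD : IsPerturbedRelaxation θ F h lam z κ s)
    (hlam : 0 < lam) (hz : 0 < z) {δ : ℝ} (hδ : 0 < δ) :
    ∀ t, s + approxTime lam z |z - θ s| δ ≤ t → θ t - (z + κ) ≤ δ := by
  intro t ht
  set s₁ := s + (max lam (2 * z))⁻¹ * log⁺ (|z - θ s| / (2 * z))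
  have hs₁ : s ≤ s₁ := le_add_of_nonneg_right (mul_nonneg (by positivity) posLog_nonneg)
  refine (hD.mono hs₁).sub_le_of_sub_le_two_mul hz (hD.sub_le_two_mul hz s₁ le_rfl) hδ t ?_
  have hM := inv_max_mul_posLog_div_le hlam (by positivity : 0 < 2 * z) |z - θ s|
  have hsum := mul_le_mul_of_nonneg_left
    (show log⁺ (|z - θ s| / lam) + 1 + log⁺ (2 * z / δ) ≤
      8 * (2 + 1 / 2 * log⁺ (|z - θ s| / lam) + 1 / 2 * log⁺ (z / (4 * lam)) + log⁺ (2 * z / δ))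
      by linarith [posLog_nonneg (x := |z - θ s| / lam), posLog_nonneg (x := z / (4 * lam)),
        posLog_nonneg (x := 2 * z / δ)]) (inv_nonneg.2 (by positivity : (0 : ℝ) ≤ 2 * z))
  rw [← mul_assoc, show (2 * z)⁻¹ * 8 = 4 * z⁻¹ by field_simp; norm_num] at hsum
  simp only [approxTime, s₁] at ht ⊢
  linarith

theorem abs_sub_le_of_approxTime_le (hD : IsPerturbedRelaxation θ F h lam z κ s)
    (hlam : 0 < lam) (hz : 0 < z) (hκ : 2 * κ ≤ z) {δ : ℝ} (hδ : 0 < δ) :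
    ∀ t, s + approxTime lam z |z - θ s| δ ≤ t → |z - θ t| ≤ κ + δ := fun t ht =>
  abs_le.2 ⟨by linarith [hD.sub_add_le_of_approxTime_le hlam hz hδ t ht],
    by linarith [hD.sub_sub_le_of_approxTime_le hlam hz hκ hδ t ht]⟩

end IsPerturbedRelaxation

theorem two_mul_abs_mul_lt_sq_add_sq {x y : ℝ} (h : x ^ 2 ≠ y ^ 2) :
    2 * |x * y| < x ^ 2 + y ^ 2 := by
  have hxy : |x| - |y| ≠ 0 := sub_ne_zero.2 fun he => h (by rw [← sq_abs x, he, sq_abs])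
  have := lt_of_le_of_ne (sq_nonneg _) (pow_ne_zero 2 hxy).symm
  nlinarith [abs_mul x y, sq_abs x, sq_abs y]

theorem sq_sub_sq_eq_of_hasDerivWithinAt {a β e : ℝ → ℝ} {s : ℝ}
    (ha : ∀ t ∈ Ici s, HasDerivWithinAt a (β t * e t) (Ici s) t)
    (hβ : ∀ t ∈ Ici s, HasDerivWithinAt β (a t * e t) (Ici s) t) :
    ∀ t ∈ Ici s, a t ^ 2 - β t ^ 2 = a s ^ 2 - β s ^ 2 := fun t ht =>
  constant_of_has_deriv_right_zero (f := fun t => a t ^ 2 - β t ^ 2)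
    (fun x hx => (((ha x hx.1).pow 2).sub ((hβ x hx.1).pow 2)).continuousWithinAt.mono
      Icc_subset_Ici_self)
    (fun x hx => ((((ha x hx.1).pow 2).sub ((hβ x hx.1).pow 2)).congr_deriv (by ring)).mono
      (Ici_subset_Ici.2 hx.1)) t ⟨ht, le_rfl⟩

theorem isPerturbedRelaxation_of_twoLayer {lam z κ t₀ : ℝ} {h a β : ℝ → ℝ} (hlam : 0 < lam)
    (ha0 : a 0 = √lam) (hβ0 : β 0 = 0)
    (hode : ∀ t ∈ Ici (0 : ℝ),
      HasDerivWithinAt β (a t * (z - a t * β t + h t)) (Ici 0) t ∧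
      HasDerivWithinAt a (β t * (z - a t * β t + h t)) (Ici 0) t)
    (ht₀ : 0 ≤ t₀) (hh : ∀ t, t₀ ≤ t → |h t| ≤ κ) :
    IsPerturbedRelaxation (fun t => a t * β t) (fun t => a t ^ 2 + β t ^ 2) h lam z κ t₀ := by
  have hcons : ∀ t ∈ Ici t₀, a t ^ 2 - β t ^ 2 = lam := fun t ht => by
    rw [sq_sub_sq_eq_of_hasDerivWithinAt (fun t ht => (hode t ht).2) (fun t ht => (hode t ht).1) t
      (ht₀.trans ht), ha0, hβ0, sq_sqrt hlam.le]
    ring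
  refine ⟨forall_hasDerivWithinAt_Ici_mono ht₀ fun τ hτ => ?_, fun τ hτ => ?_,
    fun τ hτ => two_mul_abs_mul_lt_sq_add_sq ?_, hh⟩
  · exact ((hode τ hτ).2.mul (hode τ hτ).1).congr_deriv (by ring)
  · nlinarith [hcons τ hτ, sq_nonneg (β τ)]
  · linarith [hcons τ hτ]

theorem stmt_6_general (lam z κ t₀ : ℝ) (h a β : ℝ → ℝ)
    (hlam : 0 < lam)
    (ha0 : a 0 = Real.sqrt lam) (hβ0 : β 0 = 0)
    (hode : ∀ t ∈ Ici (0 : ℝ),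
      HasDerivWithinAt β (a t * (z - a t * β t + h t)) (Ici 0) t ∧
      HasDerivWithinAt a (β t * (z - a t * β t + h t)) (Ici 0) t)
    (ht₀ : 0 ≤ t₀) (hκ : 0 < κ)
    (hhb : ∀ t, t₀ ≤ t → |h t| ≤ κ)
    (hz2 : 2 * κ ≤ z) :
    ∀ δ : ℝ, 0 < δ →
      ∀ t : ℝ, t₀ + 4 * z⁻¹ * (2
          + (1 / 2) * max (Real.log (|z - a t₀ * β t₀| / lam)) 0
          + (1 / 2) * max (Real.log (z / (4 * lam))) 0
          + max (Real.log (2 * z / δ)) 0) ≤ t →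
        |z - a t * β t| ≤ κ + δ := by
  intro δ hδ t ht
  have hD := isPerturbedRelaxation_of_twoLayer hlam ha0 hβ0 hode ht₀ hhb
  refine hD.abs_sub_le_of_approxTime_le hlam (by linarith) hz2 hδ t ?_
  simpa only [approxTime, posLog_apply, max_comm (0 : ℝ)] using ht

/-- Approximation bound (small κ) for the perturbed two-layer dynamics. -/
theorem stmt_6 (lam z κ t₀ : ℝ) (h a β : ℝ → ℝ)
    (hlam : 0 < lam) (hh : ContinuousOn h (Ici 0))
    (ha0 : a 0 = Real.sqrt lam) (hβ0 : β 0 = 0)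
    (hode : ∀ t ∈ Ici (0 : ℝ),
      HasDerivWithinAt β (a t * (z - a t * β t + h t)) (Ici 0) t ∧
      HasDerivWithinAt a (β t * (z - a t * β t + h t)) (Ici 0) t)
    (hz : 0 ≤ z) (ht₀ : 0 ≤ t₀) (hκ : 0 < κ)
    (hhb : ∀ t, t₀ ≤ t → |h t| ≤ κ)
    (hz2 : 2 * κ ≤ z) :
    ∀ δ : ℝ, 0 < δ →
      ∀ t : ℝ, t₀ + 4 * z⁻¹ * (2
          + (1 / 2) * max (Real.log (|z - a t₀ * β t₀| / lam)) 0
          + (1 / 2) * max (Real.log (z / (4 * lam))) 0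
          + max (Real.log (2 * z / δ)) 0) ≤ t →
        |z - a t * β t| ≤ κ + δ :=
  stmt_6_general lam z κ t₀ h a β hlam ha0 hβ0 hode ht₀ hκ hhb hz2
end
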